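/- arXiv:1302.3192 — 4 statements merged into one kernel-verified Lean document; each statement's English description precedes it below -/
import Mathlib

section
/- If R is a finite field of characteristic 2 and n ≥ 2, then the sum of all invertible n×n matrices over R is the zero matrix. -/
open Matrix

/-- Over a finite field of characteristic 2, the sum of all invertible `n × n`
matrices, `n ≥ 2`, is the zero matrix. -/
theorem sum_GL_eq_zero {R : Type*} [Field R] [Fintype R] [DecidableEq R]
    (hc : ringChar R = 2) (n : ℕ) (hn : 2 ≤ n) :
    ∑ A : GL (Fin n) R, (A : Matrix (Fin n) (Fin n) R) = 0 := by
  set S := ∑ A : GL (Fin n) R, (A : Matrix (Fin n) (Fin n) R) with hS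
  have key : ∀ g : GL (Fin n) R, (g : Matrix (Fin n) (Fin n) R) * S = S := by
    intro g
    rw [hS, Finset.mul_sum]
    exact Fintype.sum_equiv (Equiv.mulLeft g) _ _ (fun A => by simp [Units.val_mul])
  ext j k
  have : Nontrivial (Fin n) := ⟨⟨⟨0, by omega⟩, ⟨1, by omega⟩, by simp [Fin.ext_iff]⟩⟩
  obtain ⟨i, hi⟩ := exists_ne j
  set g : GL (Fin n) R :=
    ⟨Matrix.transvection i j 1, Matrix.transvection i j (-1),
      by rw [Matrix.transvection_mul_transvection_same _ _ hi]; simp,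
      by rw [Matrix.transvection_mul_transvection_same _ _ hi]; simp⟩ with hg
  have h := key g
  have h2 := congrFun (congrFun h i) k
  rw [hg] at h2
  simp only [Matrix.transvection_mul_apply_same, one_mul] at h2
  have : S j k = 0 := by have := add_eq_left.mp h2; exact this
  simpa using this
end

section
/- If R is a finite ring whose only unit is 1, then R is semisimple. -/
/-!
A finite ring is Artinian, so its Jacobson radical `J` is nilpotent and `R` is semisimple as soon
as `J = 0`. For `x ∈ J` the element `x` is nilpotent, hence `1 + x` is a unit; the only unit
being `1`, this forces `x = 0`.
-/

theorem IsNilpotent.eq_zero_of_units_trivial {R : Type*} [Ring R] (h : ∀ u : Rˣ, u = 1) {x : R}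
    (hx : IsNilpotent x) : x = 0 := by
  have : 1 + x = 1 := congrArg Units.val (h hx.isUnit_one_add.unit)
  simpa using this

theorem Ring.isNilpotent_of_mem_jacobson {R : Type*} [Ring R] [IsSemiprimaryRing R] {x : R}
    (hx : x ∈ Ring.jacobson R) : IsNilpotent x := by
  obtain ⟨n, hn⟩ := IsSemiprimaryRing.isNilpotent (R := R)
  exact ⟨n, by simpa [hn] using Ideal.pow_mem_pow hx n⟩

theorem Ring.jacobson_eq_bot_of_units_trivial {R : Type*} [Ring R] [IsSemiprimaryRing R]
    (h : ∀ u : Rˣ, u = 1) : Ring.jacobson R = ⊥ :=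
  eq_bot_iff.mpr fun _ hx ↦ (isNilpotent_of_mem_jacobson hx).eq_zero_of_units_trivial h

/-- A finite ring whose only unit is `1` is semisimple. -/
theorem semisimple_of_units_trivial {R : Type*} [Ring R] [Fintype R]
    (h : ∀ u : Rˣ, u = 1) :
    IsSemisimpleRing R :=
  IsArtinianRing.isSemisimpleRing_iff_jacobson.mpr (Ring.jacobson_eq_bot_of_units_trivial h)
end

section
/- If R is a finite ring whose group of units is trivial, then R is a Boolean ring, i.e., every element of R is idempotent. -/
private lemma pow_idem_of {M : Type*} [Monoid M] (x : M) (m d : ℕ) (hm : 1 ≤ m) (hd : 1 ≤ d)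
    (hx : x ^ m = x ^ (m + d)) : 1 ≤ m * d ∧ IsIdempotentElem (x ^ (m * d)) := by
  have key : ∀ t, m ≤ t → x ^ t = x ^ (t + d) := by
    intro t ht
    obtain ⟨c, rfl⟩ := Nat.exists_eq_add_of_le ht
    rw [show m + c + d = (m + d) + c by ring, pow_add, pow_add, hx]
  have key2 : ∀ j t, m ≤ t → x ^ t = x ^ (t + j * d) := by
    intro j
    induction j with
    | zero => simp
    | succ n ih =>
      intro t ht
      rw [ih t ht, show t + (n + 1) * d = (t + n * d) + d by ring]
      exact key _ (by omega)
  refine ⟨Nat.one_le_iff_ne_zero.2 (by positivity), ?_⟩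
  unfold IsIdempotentElem
  rw [← pow_add]
  exact (key2 m (m * d) (Nat.le_mul_of_pos_right m (by omega))).symm

/-- In a finite monoid, some positive power of any element is idempotent. -/
private lemma exists_pow_idem {R : Type*} [Monoid R] [Fintype R] (x : R) :
    ∃ k : ℕ, 1 ≤ k ∧ IsIdempotentElem (x ^ k) := by
  obtain ⟨a, b, hab, heq⟩ := Finite.exists_ne_map_eq_of_infinite (fun n : ℕ => x ^ (n + 1))
  wlog hlt : a < b generalizing a b
  · exact this b a hab.symm heq.symm (by omega)
  have hxmd : x ^ (a + 1) = x ^ ((a + 1) + (b - a)) := by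
    rw [show x ^ (a + 1) = x ^ (b + 1) from heq]; congr 1; omega
  obtain ⟨h1, h2⟩ := pow_idem_of x (a + 1) (b - a) (by omega) (by omega) hxmd
  exact ⟨_, h1, h2⟩

/-- A finite ring whose group of units is trivial is Boolean. -/
theorem boolean_of_units_trivial {R : Type*} [Ring R] [Fintype R]
    (h : ∀ u : Rˣ, u = 1) :
    ∀ x : R, x ^ 2 = x := by
  have hu : ∀ a : R, IsUnit a → a = 1 := by
    rintro a ⟨u, rfl⟩; rw [h u, Units.val_one]
  -- R is reduced
  have hnil : ∀ a : R, IsNilpotent a → a = 0 := by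
    intro a ha
    have := hu _ ha.isUnit_one_add
    rwa [add_eq_left] at this
  intro x
  obtain ⟨k, hk, he⟩ := exists_pow_idem x
  generalize hedef : x ^ k = e at he
  have hcomm : Commute x e := hedef ▸ (Commute.refl x).pow_right k
  have hc1 : Commute x (1 - e) := (Commute.one_right x).sub_right hcomm
  have h1e : (1 - e) ^ k = 1 - e := by
    rw [show k = (k - 1) + 1 by omega]
    exact he.one_sub.pow_succ_eq _
  -- x * (1 - e) is nilpotent, hence zero
  have hxe : x * (1 - e) = 0 := by
    apply hnil
    refine ⟨k, ?_⟩
    rw [hc1.mul_pow, h1e, hedef, mul_sub, mul_one, he.eq, sub_self]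
  have hx2k : x * x ^ (2 * k - 1) = e := by
    rw [← pow_succ', show 2 * k - 1 + 1 = k + k by omega, pow_add, hedef, he.eq]
  have h2kx : x ^ (2 * k - 1) * x = e := by
    rw [← pow_succ, show 2 * k - 1 + 1 = k + k by omega, pow_add, hedef, he.eq]
  have hpe : x ^ (2 * k - 1) * (1 - e) = 0 := by
    have hs : x ^ (2 * k - 1) = x ^ (2 * k - 2) * x := by
      rw [← pow_succ]; congr 1; omega
    rw [hs, mul_assoc, hxe, mul_zero]
  have hep : (1 - e) * x ^ (2 * k - 1) = 0 := by
    have hc : Commute (x ^ (2 * k - 1)) (1 - e) :=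
      (Commute.one_right _).sub_right (hedef ▸ (Commute.refl x).pow_pow (2 * k - 1) k)
    rw [← hc.eq]; exact hpe
  have hexe : (1 - e) * x = 0 := by rw [← hc1.eq]; exact hxe
  -- x + (1 - e) is a unit
  have hone : e + (1 - e) = 1 := by abel
  have hunit : IsUnit (x + (1 - e)) := by
    refine ⟨⟨x + (1 - e), x ^ (2 * k - 1) + (1 - e), ?_, ?_⟩, rfl⟩
    · rw [add_mul, mul_add, mul_add, hx2k, hxe, hep, he.one_sub.eq, add_zero, zero_add, hone]
    · rw [add_mul, mul_add, mul_add, h2kx, hpe, hexe, he.one_sub.eq, add_zero, zero_add, hone]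
  have hx1 := hu _ hunit
  have hxeq : x = e := add_right_cancel (hx1.trans hone.symm)
  rw [hxeq, sq, he.eq]
end

section
/- If R is a finite ring whose group of units is trivial, then R is commutative. -/
/-- A finite ring whose group of units is trivial is commutative. -/
theorem comm_of_units_trivial {R : Type*} [Ring R] [Fintype R]
    (h : ∀ u : Rˣ, u = 1) :
    ∀ x y : R, x * y = y * x := by
  -- units are literally 1 in R
  have hval : ∀ a b : R, a * b = 1 → b * a = 1 → a = 1 := by
    intro a b hab hba
    have := h ⟨a, b, hab, hba⟩
    exact congrArg Units.val this
  -- characteristic 2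
  have hneg : (-1 : R) = 1 := hval (-1) (-1) (by simp) (by simp)
  have char2 : ∀ a : R, a + a = 0 := by
    intro a
    have h2 : (1 : R) + 1 = 0 := by nth_rewrite 1 [← hneg]; exact neg_add_cancel 1
    calc a + a = a * (1 + 1) := by noncomm_ring
      _ = 0 := by rw [h2, mul_zero]
  -- reduced
  have hred : ∀ a : R, IsNilpotent a → a = 0 := by
    intro a ha
    obtain ⟨u, hu⟩ := IsNilpotent.isUnit_one_add ha
    have h1 : (u : R) = 1 := congrArg Units.val (h u)
    have h2 : (1 : R) + a = 1 := by rw [← hu, h1]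
    exact left_eq_add.mp h2.symm
  -- idempotents are central
  have hcen : ∀ e : R, e * e = e → ∀ a : R, e * a = a * e := by
    intro e he a
    have h1 : e * a = e * a * e := by
      have hc : (e * a - e * a * e) * e = 0 := by
        have : (e * a - e * a * e) * e = e * a * e - e * a * (e * e) := by noncomm_ring
        rw [this, he, sub_self]
      have hsq : (e * a - e * a * e) * (e * a - e * a * e) = 0 := by
        have : (e * a - e * a * e) * (e * a - e * a * e)
            = ((e * a - e * a * e) * e) * a - ((e * a - e * a * e) * e) * (a * e) := by
          noncomm_ring
        rw [this, hc, zero_mul, zero_mul, sub_self]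
      exact sub_eq_zero.mp (hred _ ⟨2, by rw [sq]; exact hsq⟩)
    have h2 : a * e = e * a * e := by
      have hc : e * (a * e - e * a * e) = 0 := by
        have : e * (a * e - e * a * e) = e * a * e - e * e * (a * e) := by noncomm_ring
        rw [this, he]
        noncomm_ring
      have hsq : (a * e - e * a * e) * (a * e - e * a * e) = 0 := by
        have : (a * e - e * a * e) * (a * e - e * a * e)
            = a * (e * (a * e - e * a * e)) - e * a * (e * (a * e - e * a * e)) := by
          noncomm_ring
        rw [this, hc, mul_zero, mul_zero, sub_self]
      exact sub_eq_zero.mp (hred _ ⟨2, by rw [sq]; exact hsq⟩)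
    rw [h1, ← h2]
  -- every element is idempotent
  have hidem : ∀ x : R, x * x = x := by
    intro x
    obtain ⟨i, j, hne, hij⟩ := Finite.exists_ne_map_eq_of_infinite (fun n : ℕ => x ^ n)
    wlog hlt : i < j generalizing i j
    · exact this j i hne.symm hij.symm (by omega)
    set d := j - i with hd
    have hd1 : 1 ≤ d := by omega
    have hstep : ∀ k : ℕ, x ^ (i + k + d) = x ^ (i + k) := by
      intro k
      rw [show i + k + d = (i + d) + k from by omega, pow_add,
        show i + d = j from by omega, ← hij, ← pow_add]
    have key : ∀ t k : ℕ, x ^ (i + k + t * d) = x ^ (i + k) := by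
      intro t
      induction t with
      | zero => simp
      | succ n ih =>
        intro k
        have e1 : i + k + (n + 1) * d = i + (k + n * d) + d := by ring
        have e2 : i + (k + n * d) = i + k + n * d := by ring
        rw [e1, hstep, e2, ih]
    obtain ⟨m, hm, him⟩ : ∃ m, m = (i + 2) * d ∧ i + 2 ≤ m :=
      ⟨(i + 2) * d, rfl, Nat.le_mul_of_pos_right _ (by omega)⟩
    set e := x ^ m with he'
    have hexp : i + (m - i) + (i + 2) * d = m + m := by
      rw [show i + (m - i) = m from by omega, hm]
    have he : e * e = e := by
      rw [he', ← pow_add, ← hexp, key, show i + (m - i) = m from by omega]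
    have hec : ∀ a : R, e * a = a * e := hcen e he
    have hxe : Commute x e := (hec x).symm
    set a := x * e with ha'
    have hem : e ^ m = e := by
      have h1 := IsIdempotentElem.pow_succ_eq (m - 1) he
      rwa [show m - 1 + 1 = m from by omega] at h1
    have ham : a ^ m = e := by
      rw [ha', hxe.mul_pow, ← he', hem, he]
    have hae : a * e = a := by rw [ha', mul_assoc, he]
    have hea : e * a = a := by rw [hec a]; exact hae
    have hab : a * a ^ (m - 1) = e := by
      rw [← pow_succ', show m - 1 + 1 = m from by omega, ham]
    have hba : a ^ (m - 1) * a = e := by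
      rw [← pow_succ, show m - 1 + 1 = m from by omega, ham]
    have ham1e : a ^ (m - 1) * e = a ^ (m - 1) := by
      have h1 : a ^ (m - 1) = a ^ (m - 2) * a := by
        rw [← pow_succ, show m - 2 + 1 = m - 1 from by omega]
      rw [h1, mul_assoc, hae]
    have heam1 : e * a ^ (m - 1) = a ^ (m - 1) := by
      rw [hec _]; exact ham1e
    -- a + 1 - e is a unit, hence equal to 1
    have hu1 : (a + 1 - e) * (a ^ (m - 1) + 1 - e) = 1 := by
      calc (a + 1 - e) * (a ^ (m - 1) + 1 - e)
          = a * a ^ (m - 1) + a - a * e + a ^ (m - 1) + 1 - e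
            - e * a ^ (m - 1) - e + e * e := by noncomm_ring
        _ = e + a - a + a ^ (m - 1) + 1 - e - a ^ (m - 1) - e + e := by
            rw [hab, hae, heam1, he]
        _ = 1 := by abel
    have hu2 : (a ^ (m - 1) + 1 - e) * (a + 1 - e) = 1 := by
      calc (a ^ (m - 1) + 1 - e) * (a + 1 - e)
          = a ^ (m - 1) * a + a ^ (m - 1) - a ^ (m - 1) * e + a + 1 - e
            - e * a - e + e * e := by noncomm_ring
        _ = e + a ^ (m - 1) - a ^ (m - 1) + a + 1 - e - a - e + e := by
            rw [hba, ham1e, hea, he]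
        _ = 1 := by abel
    have hae1 : a + 1 - e = 1 := hval _ _ hu1 hu2
    have hxee : x * e = e := by
      have h' : a - e = a + 1 - e - 1 := by abel
      rw [hae1, sub_self] at h'
      rw [← ha']
      exact sub_eq_zero.mp h'
    -- x * (1 - e) is nilpotent, hence zero
    have hx1e : x * (1 - e) = 0 := by
      apply hred
      refine ⟨m, ?_⟩
      have hc : Commute x (1 - e) := (Commute.one_right x).sub_right hxe
      rw [hc.mul_pow]
      have h1e : (1 - e) ^ m = 1 - e := by
        have hid : (1 - e) * (1 - e) = 1 - e := by
          have : (1 - e) * (1 - e) = 1 - e - e + e * e := by noncomm_ring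
          rw [this, he]; abel
        have h1 := IsIdempotentElem.pow_succ_eq (m - 1) hid
        rwa [show m - 1 + 1 = m from by omega] at h1
      rw [h1e, ← he']
      have : e * (1 - e) = e - e * e := by noncomm_ring
      rw [this, he, sub_self]
    have hx : x = e := by
      have h' : x - x * e = 0 := by rw [← hx1e]; noncomm_ring
      have h'' : x = x * e := sub_eq_zero.mp h'
      rw [h'', hxee]
    rw [hx]; exact he
  -- a Boolean ring is commutative
  intro x y
  have hxy := hidem (x + y)
  have hx := hidem x
  have hy := hidem y
  have hexp : x * x + x * y + y * x + y * y = x + y := by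
    calc x * x + x * y + y * x + y * y = (x + y) * (x + y) := by noncomm_ring
      _ = x + y := hxy
  rw [hx, hy] at hexp
  have hsum : x * y + y * x = 0 := by
    have h1 : x * y + y * x = (x + x * y + y * x + y) - x - y := by abel
    rw [hexp] at h1
    rw [h1]; abel
  have h2 := char2 (y * x)
  calc x * y = x * y + (y * x + y * x) := by rw [h2, add_zero]
    _ = (x * y + y * x) + y * x := by abel
    _ = y * x := by rw [hsum, zero_add]
end
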